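/- arXiv:2508.08395 — 3 statements merged into one kernel-verified Lean document; each statement's English description precedes it below -/
import Mathlib

section
/- For every integer q ≥ 2, the polynomial a(t) = t + q is NOT a profile with respect to q; that is, the evaluation map b ↦ b(q) fails to be injective on {b ∈ ℤ_{≥0}[t] : 0 ⪯ b ⪯ a}. However, for any k ≥ 2, the same polynomial t + q IS injective in this sense when evaluated at q^k, i.e. b ↦ b(q^k) is injective on {b : 0 ⪯ b ⪯ a}. -/
open Polynomial

lemma stmt2_repr (q : ℕ) (b : Polynomial ℕ)
    (hb : ∀ j, b.coeff j ≤ (Polynomial.X + Polynomial.C q).coeff j) :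
    b = Polynomial.C (b.coeff 0) + Polynomial.C (b.coeff 1) * Polynomial.X := by
  ext j
  match j with
  | 0 => simp
  | 1 => simp
  | (n+2) =>
    have h := hb (n+2)
    simp [Polynomial.coeff_X, Polynomial.coeff_C] at h ⊢
    omega

/-- For `q ≥ 2`, the polynomial `t + q` is not a profile with respect to `q`,
but evaluation at `q ^ k` is injective on its down-set for every `k ≥ 2`. -/
theorem stmt2 (q : ℕ) (hq : 2 ≤ q) :
    (¬ Set.InjOn (fun b : Polynomial ℕ => Polynomial.eval q b)
        {b : Polynomial ℕ | ∀ j, b.coeff j ≤ (Polynomial.X + Polynomial.C q).coeff j}) ∧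
    (∀ k : ℕ, 2 ≤ k →
      Set.InjOn (fun b : Polynomial ℕ => Polynomial.eval (q ^ k) b)
        {b : Polynomial ℕ | ∀ j, b.coeff j ≤ (Polynomial.X + Polynomial.C q).coeff j}) := by
  constructor
  · intro h
    have h1 : (Polynomial.C q : Polynomial ℕ) ∈
        {b : Polynomial ℕ | ∀ j, b.coeff j ≤ (Polynomial.X + Polynomial.C q).coeff j} := by
      intro j
      rw [Polynomial.coeff_add]
      exact Nat.le_add_left _ _
    have h2 : (Polynomial.X : Polynomial ℕ) ∈
        {b : Polynomial ℕ | ∀ j, b.coeff j ≤ (Polynomial.X + Polynomial.C q).coeff j} := by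
      intro j
      rw [Polynomial.coeff_add]
      exact Nat.le_add_right _ _
    have := h h1 h2 (by simp)
    have := congrArg (fun p => Polynomial.coeff p 1) this
    simp [Polynomial.coeff_C] at this
  · intro k hk b1 hb1 b2 hb2 heq
    have hN : q < q ^ k := by
      calc q = q ^ 1 := (pow_one q).symm
      _ < q ^ k := Nat.pow_lt_pow_right (by omega) (by omega)
    have e1 := stmt2_repr q b1 hb1
    have e2 := stmt2_repr q b2 hb2
    have hc0 : b1.coeff 0 ≤ q := by simpa using hb1 0
    have hc0' : b2.coeff 0 ≤ q := by simpa using hb2 0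
    have hc1 : b1.coeff 1 ≤ 1 := by simpa using hb1 1
    have hc1' : b2.coeff 1 ≤ 1 := by simpa using hb2 1
    simp only at heq
    rw [e1, e2] at heq
    simp only [Polynomial.eval_add, Polynomial.eval_mul, Polynomial.eval_C,
      Polynomial.eval_X] at heq
    have h0 : b1.coeff 0 = b2.coeff 0 ∧ b1.coeff 1 = b2.coeff 1 := by
      interval_cases h : b1.coeff 1 <;> interval_cases h' : b2.coeff 1 <;> omega
    rw [e1, e2, h0.1, h0.2]
end

section
/- Let 𝐚 = (a_1, ..., a_c) be a multi-profile where a_i = ∑_{j=0}^{m_i} a_{i,j} t^j. Define f(k) = (k+1)(n + k − 2r) − ∑_{i=1}^c ∏_{j=0}^{m_i} C(k + a_{i,j}, k) + 1 for real k ≥ 0, where C(k+d, k) is interpreted as the degree-d polynomial (∏_{s=1}^d (k+s))/d!. If the maximum coefficient sum max_i ∑_j a_{i,j} is at least 3, then f is concave on k ≥ 0, and hence min_{0 ≤ k ≤ r} f(k) = min(f(0), f(r)). -/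
open Finset

/-- The binomial coefficient `C(k + d, k)` interpreted as the degree-`d` real
polynomial `∏_{s=1}^{d} (k + s) / d!` in `k`. -/
noncomputable def rChoose (k : ℝ) (d : ℕ) : ℝ :=
  (∏ s ∈ Finset.range d, (k + (s + 1 : ℕ))) / (Nat.factorial d)

/-- A function that is convex, monotone and nonnegative on `[0, ∞)`. -/
structure Nice (f : ℝ → ℝ) : Prop where
  cv : ConvexOn ℝ (Set.Ici 0) f
  mono : MonotoneOn f (Set.Ici 0)
  nonneg : ∀ x ∈ Set.Ici (0 : ℝ), 0 ≤ f x

lemma Nice.congr {f g : ℝ → ℝ} (hf : Nice f) (h : ∀ x, f x = g x) : Nice g := by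
  have : f = g := funext h
  exact this ▸ hf

lemma nice_const {c : ℝ} (hc : 0 ≤ c) : Nice (fun _ => c) :=
  ⟨convexOn_const c (convex_Ici 0), fun _ _ _ _ _ => le_rfl, fun _ _ => hc⟩

lemma Nice.add {f g : ℝ → ℝ} (hf : Nice f) (hg : Nice g) : Nice (fun k => f k + g k) :=
  ⟨hf.cv.add hg.cv, fun x hx y hy h => add_le_add (hf.mono hx hy h) (hg.mono hx hy h),
   fun x hx => add_nonneg (hf.nonneg x hx) (hg.nonneg x hx)⟩

lemma Nice.mul {f g : ℝ → ℝ} (hf : Nice f) (hg : Nice g) : Nice (fun k => f k * g k) := by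
  have hcv : ConvexOn ℝ (Set.Ici 0) (f * g) :=
    hf.cv.mul hg.cv (fun x hx => hf.nonneg x hx) (fun x hx => hg.nonneg x hx)
      (hf.mono.monovaryOn hg.mono)
  exact ⟨hcv, fun x hx y hy h =>
      mul_le_mul (hf.mono hx hy h) (hg.mono hx hy h) (hg.nonneg x hx) (hf.nonneg y hy),
    fun x hx => mul_nonneg (hf.nonneg x hx) (hg.nonneg x hx)⟩

lemma convexOn_affine (p q : ℝ) : ConvexOn ℝ (Set.Ici 0) (fun x : ℝ => p * x + q) := by
  refine ⟨convex_Ici 0, fun x _ y _ α β hα hβ hαβ => le_of_eq ?_⟩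
  simp only [smul_eq_mul]
  linear_combination (-q) * hαβ

lemma concaveOn_affine (p q : ℝ) : ConcaveOn ℝ (Set.Ici 0) (fun x : ℝ => p * x + q) := by
  refine ⟨convex_Ici 0, fun x _ y _ α β hα hβ hαβ => le_of_eq ?_⟩
  simp only [smul_eq_mul]
  linear_combination q * hαβ

lemma nice_affine {p q : ℝ} (hp : 0 ≤ p) (hq : 0 ≤ q) :
    Nice (fun x : ℝ => p * x + q) := by
  refine ⟨convexOn_affine p q, fun x hx y hy h => by nlinarith, fun x hx => ?_⟩
  have : (0:ℝ) ≤ x := hx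
  nlinarith

lemma nice_pow (n : ℕ) : Nice (fun x : ℝ => x ^ n) := by
  refine ⟨convexOn_pow n, fun x hx y hy h => pow_le_pow_left₀ hx h n,
    fun x hx => pow_nonneg hx n⟩

lemma nice_prod {ι : Type*} (s : Finset ι) (F : ι → ℝ → ℝ) (h : ∀ i ∈ s, Nice (F i)) :
    Nice (fun k => ∏ i ∈ s, F i k) := by
  induction s using Finset.cons_induction with
  | empty => exact (nice_const zero_le_one).congr (by simp)
  | cons i s his ih =>
    have h1 := h i (Finset.mem_cons_self i s)
    have h2 := ih (fun j hj => h j (Finset.mem_cons_of_mem hj))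
    exact (h1.mul h2).congr (fun k => by rw [Finset.prod_cons])

lemma nice_rChoose (d : ℕ) : Nice (fun k => rChoose k d) := by
  have h1 : Nice (fun k => ∏ s ∈ Finset.range d, (k + (s + 1 : ℕ))) := by
    refine nice_prod _ _ (fun s _ => ?_)
    have : Nice (fun k : ℝ => 1 * k + ((s + 1 : ℕ) : ℝ)) :=
      nice_affine zero_le_one (by positivity)
    exact this.congr (fun k => by ring)
  have h2 : Nice (fun _ : ℝ => ((Nat.factorial d : ℝ))⁻¹) :=
    nice_const (by positivity)
  exact (h1.mul h2).congr (fun k => by rw [rChoose, div_eq_mul_inv])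

lemma prod_range_cast (d : ℕ) : ∏ s ∈ Finset.range d, ((0:ℝ) + (s + 1 : ℕ)) = Nat.factorial d := by
  induction d with
  | zero => simp
  | succ e ih => rw [Finset.prod_range_succ, ih]; push_cast [Nat.factorial_succ]; ring

lemma rChoose_zero_left (d : ℕ) : rChoose 0 d = 1 := by
  rw [rChoose, prod_range_cast, div_self]
  positivity

lemma fact_aux1 (e : ℕ) : ∏ s ∈ Finset.range e, (s + 2) = Nat.factorial (e + 1) := by
  induction e with
  | zero => simp
  | succ d ih => rw [Finset.prod_range_succ, ih, Nat.factorial_succ (d + 1)]; ring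

lemma fact_aux3 (e : ℕ) : (∏ s ∈ Finset.range e, (s + 4)) * 6 = Nat.factorial (e + 3) := by
  induction e with
  | zero => simp [Nat.factorial]
  | succ d ih =>
    rw [Finset.prod_range_succ, show Nat.factorial (d + 1 + 3) = Nat.factorial (d + 3) * (d + 4) by
      rw [show d + 1 + 3 = (d + 3) + 1 by ring, Nat.factorial_succ]; ring, ← ih]
    ring

/-- Pull out a `(k+1)` factor of `rChoose k d` for `d ≥ 1`. -/
lemma rChoose_factor_one {d : ℕ} (hd : 1 ≤ d) :
    ∃ g : ℝ → ℝ, Nice g ∧ g 0 = 1 ∧ ∀ k, rChoose k d = (k + 1) * g k := by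
  obtain ⟨e, rfl⟩ : ∃ e, d = e + 1 := ⟨d - 1, (Nat.succ_pred_eq_of_pos hd).symm⟩
  refine ⟨fun k => (∏ s ∈ Finset.range e, (k + (s + 2 : ℕ))) / Nat.factorial (e + 1), ?_, ?_, ?_⟩
  · have h1 : Nice (fun k => ∏ s ∈ Finset.range e, (k + (s + 2 : ℕ))) := by
      refine nice_prod _ _ (fun s _ => ?_)
      have : Nice (fun k : ℝ => 1 * k + ((s + 2 : ℕ) : ℝ)) := nice_affine zero_le_one (by positivity)
      exact this.congr (fun k => by ring)
    have h2 : Nice (fun _ : ℝ => ((Nat.factorial (e + 1) : ℝ))⁻¹) := nice_const (by positivity)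
    exact (h1.mul h2).congr (fun k => by rw [div_eq_mul_inv])
  · show (∏ s ∈ Finset.range e, ((0:ℝ) + (s + 2 : ℕ))) / (Nat.factorial (e+1) : ℝ) = 1
    rw [show ∏ s ∈ Finset.range e, ((0:ℝ) + (s + 2 : ℕ)) = (Nat.factorial (e+1) : ℝ) by
        rw [← fact_aux1 e]; push_cast; exact Finset.prod_congr rfl (fun s _ => by ring)]
    rw [div_self (by positivity)]
  · intro k
    rw [rChoose, Finset.prod_range_succ']
    have hb : ∀ s ∈ Finset.range e, (k + ((s + 1 + 1 : ℕ) : ℝ)) = k + ((s + 2 : ℕ) : ℝ) := by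
      intro s _; push_cast; ring
    rw [Finset.prod_congr rfl hb]
    push_cast
    ring

/-- Pull out a `(k+1)(k+2)(k+3)/6` factor of `rChoose k d` for `d ≥ 3`. -/
lemma rChoose_factor_three {d : ℕ} (hd : 3 ≤ d) :
    ∃ g : ℝ → ℝ, Nice g ∧ g 0 = 1 ∧
      ∀ k, rChoose k d = ((k + 1) * (k + 2) * (k + 3) / 6) * g k := by
  obtain ⟨e, rfl⟩ : ∃ e, d = 3 + e := ⟨d - 3, by omega⟩
  refine ⟨fun k => 6 * (∏ s ∈ Finset.range e, (k + (s + 4 : ℕ))) / Nat.factorial (3 + e),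
    ?_, ?_, ?_⟩
  · have h1 : Nice (fun k => ∏ s ∈ Finset.range e, (k + (s + 4 : ℕ))) := by
      refine nice_prod _ _ (fun s _ => ?_)
      have : Nice (fun k : ℝ => 1 * k + ((s + 4 : ℕ) : ℝ)) := nice_affine zero_le_one (by positivity)
      exact this.congr (fun k => by ring)
    have h2 : Nice (fun _ : ℝ => 6 * ((Nat.factorial (3 + e) : ℝ))⁻¹) := nice_const (by positivity)
    exact (h1.mul h2).congr (fun k => by rw [div_eq_mul_inv]; ring)
  · show (6 * ∏ s ∈ Finset.range e, ((0:ℝ) + (s + 4 : ℕ))) / (Nat.factorial (3+e) : ℝ) = 1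
    have : ∏ s ∈ Finset.range e, ((0:ℝ) + (s + 4 : ℕ)) = (∏ s ∈ Finset.range e, ((s:ℕ) + 4) : ℕ) := by
      push_cast; exact Finset.prod_congr rfl (fun s _ => by ring)
    rw [this]
    rw [div_eq_one_iff_eq (by positivity)]
    rw [show (3 + e) = e + 3 by ring, ← fact_aux3 e]
    push_cast; ring
  · intro k
    rw [rChoose, Finset.prod_range_add]
    have h3 : ∏ s ∈ Finset.range 3, (k + ((s + 1 : ℕ) : ℝ)) = (k+1)*(k+2)*(k+3) := by
      simp [Finset.prod_range_succ]; push_cast; ring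
    rw [h3]
    have h4 : ∀ s ∈ Finset.range e, (k + ((3 + s + 1 : ℕ) : ℝ)) = k + ((s + 4 : ℕ) : ℝ) := by
      intro s _; push_cast; ring
    rw [Finset.prod_congr rfl h4]
    field_simp

/-- The key convexity lemma: `P = G * Q` with `G - k²` nice, `Q` nice with `Q 0 = 1`
implies `P - k²` is convex on `[0, ∞)`. -/
lemma key_convex {P G Q : ℝ → ℝ} (hPGQ : ∀ k, P k = G k * Q k)
    (hG : Nice (fun k => G k - k ^ 2)) (hQ : Nice Q) (hQ0 : Q 0 = 1) :
    ConvexOn ℝ (Set.Ici 0) (fun k => P k - k ^ 2) := by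
  have hQ1 : ∀ x ∈ Set.Ici (0:ℝ), 1 ≤ Q x := fun x hx => hQ0 ▸ hQ.mono Set.self_mem_Ici hx hx
  have hQm1 : Nice (fun k => Q k - 1) := by
    refine ⟨?_, fun x hx y hy h => by
        have := hQ.mono hx hy h; simpa using sub_le_sub_right this 1,
      fun x hx => by linarith [hQ1 x hx]⟩
    exact hQ.cv.sub (concaveOn_const 1 (convex_Ici 0))
  have t1 : Nice (fun k => (G k - k ^ 2) * Q k) := hG.mul hQ
  have t2 : Nice (fun k => k ^ 2 * (Q k - 1)) := (nice_pow 2).mul hQm1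
  have := (t1.cv.add t2.cv)
  have heq : (fun k => (G k - k ^ 2) * Q k + k ^ 2 * (Q k - 1)) = (fun k => P k - k ^ 2) := by
    funext k; rw [hPGQ k]; ring
  rwa [← heq]

lemma convexOn_finset_sum {ι : Type*} (s : Finset ι) (F : ι → ℝ → ℝ)
    (h : ∀ i ∈ s, ConvexOn ℝ (Set.Ici 0) (F i)) :
    ConvexOn ℝ (Set.Ici 0) (fun k => ∑ i ∈ s, F i k) := by
  induction s using Finset.cons_induction with
  | empty => simpa using convexOn_const (0:ℝ) (convex_Ici 0)
  | cons i s his ih =>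
    have h1 := (h i (Finset.mem_cons_self i s)).add
      (ih fun j hj => h j (Finset.mem_cons_of_mem hj))
    have heq : (fun k => ∑ j ∈ Finset.cons i s his, F j k)
        = F i + (fun k => ∑ j ∈ s, F j k) := funext fun k => by
      rw [Finset.sum_cons]; rfl
    rwa [heq]

lemma special_convex {N : ℕ} (b : Fin (N + 1) → ℕ) (h3 : 3 ≤ ∑ j, b j) :
    ConvexOn ℝ (Set.Ici 0) (fun k => (∏ j, rChoose k (b j)) - k ^ 2) := by
  obtain ⟨j₀, hj₀⟩ : ∃ j, b j ≠ 0 := by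
    by_contra h; push_neg at h; simp [h] at h3
  by_cases hA : ∃ j₁, j₁ ≠ j₀ ∧ b j₁ ≠ 0
  · obtain ⟨j₁, hne, hj₁⟩ := hA
    obtain ⟨g₀, hg₀, hg₀0, hfac₀⟩ := rChoose_factor_one (Nat.one_le_iff_ne_zero.2 hj₀)
    obtain ⟨g₁, hg₁, hg₁0, hfac₁⟩ := rChoose_factor_one (Nat.one_le_iff_ne_zero.2 hj₁)
    refine key_convex (G := fun k => (k + 1) ^ 2)
      (Q := fun k => g₀ k * g₁ k * ∏ j ∈ (Finset.univ.erase j₀).erase j₁, rChoose k (b j))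
      ?_ ?_ ?_ ?_
    · intro k
      rw [← Finset.mul_prod_erase _ _ (Finset.mem_univ j₀),
          ← Finset.mul_prod_erase _ _ (Finset.mem_erase.2 ⟨hne, Finset.mem_univ j₁⟩),
          hfac₀, hfac₁]
      ring
    · exact (nice_affine (by norm_num : (0:ℝ) ≤ 2) zero_le_one).congr (fun k => by ring)
    · exact (hg₀.mul hg₁).mul (nice_prod _ _ (fun j _ => nice_rChoose _))
    · simp [hg₀0, hg₁0, rChoose_zero_left]
  · push_neg at hA
    have hb3 : 3 ≤ b j₀ := by
      have hz : ∀ j ∈ Finset.univ.erase j₀, b j = 0 := fun j hj => hA j (Finset.mem_erase.1 hj).1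
      have hsum : ∑ j, b j = b j₀ := by
        rw [← Finset.add_sum_erase _ _ (Finset.mem_univ j₀), Finset.sum_eq_zero hz]; omega
      omega
    obtain ⟨g, hg, hg0, hfac⟩ := rChoose_factor_three hb3
    refine key_convex (G := fun k => (k + 1) * (k + 2) * (k + 3) / 6)
      (Q := fun k => g k * ∏ j ∈ Finset.univ.erase j₀, rChoose k (b j)) ?_ ?_ ?_ ?_
    · intro k
      rw [← Finset.mul_prod_erase _ _ (Finset.mem_univ j₀), hfac]
      ring
    · have h6 : Nice (fun k : ℝ => (1/6) * (k ^ 3 + (11 * k + 6))) :=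
        (nice_const (by norm_num : (0:ℝ) ≤ 1/6)).mul
          ((nice_pow 3).add (nice_affine (by norm_num) (by norm_num)))
      exact h6.congr (fun k => by ring)
    · exact hg.mul (nice_prod _ _ (fun j _ => nice_rChoose _))
    · simp [hg0, rChoose_zero_left]


/-- if some coefficient sum is at least `3`, the function
`f(k) = (k+1)(n + k - 2r) - ∑_i ∏_j C(k + a_{i,j}, k) + 1` is concave on `k ≥ 0`,
hence its minimum over `[0, r]` is attained at an endpoint. -/
theorem stmt12 (c : ℕ) (m : Fin c → ℕ) (a : (i : Fin c) → Fin (m i + 1) → ℕ)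
    (n r : ℝ) (hr : 0 ≤ r)
    (hmax : ∃ i : Fin c, 3 ≤ ∑ j, a i j) :
    ConcaveOn ℝ (Set.Ici (0 : ℝ))
      (fun k : ℝ => (k + 1) * (n + k - 2 * r) -
        (∑ i, ∏ j, rChoose k (a i j)) + 1) ∧
    ∀ k ∈ Set.Icc (0 : ℝ) r,
      min ((0 + 1) * (n + 0 - 2 * r) - (∑ i, ∏ j, rChoose 0 (a i j)) + 1)
          ((r + 1) * (n + r - 2 * r) - (∑ i, ∏ j, rChoose r (a i j)) + 1)
        ≤ (k + 1) * (n + k - 2 * r) - (∑ i, ∏ j, rChoose k (a i j)) + 1 := by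
  obtain ⟨i₀, h3⟩ := hmax
  have hspecial := special_convex (a i₀) h3
  have hrest : ConvexOn ℝ (Set.Ici 0)
      (fun k => ∑ i ∈ Finset.univ.erase i₀, ∏ j, rChoose k (a i j)) :=
    convexOn_finset_sum _ _ (fun i _ => (nice_prod _ _ (fun j _ => nice_rChoose _)).cv)
  have hcon : ConcaveOn ℝ (Set.Ici (0 : ℝ))
      (fun k : ℝ => (k + 1) * (n + k - 2 * r) - (∑ i, ∏ j, rChoose k (a i j)) + 1) := by
    have h1 : ConcaveOn ℝ (Set.Ici 0)
        (fun k : ℝ => (n - 2 * r + 1) * k + (n - 2 * r + 1)) := concaveOn_affine _ _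
    have hc := (h1.add hspecial.neg).add hrest.neg
    have heq : (fun k : ℝ => (k + 1) * (n + k - 2 * r) - (∑ i, ∏ j, rChoose k (a i j)) + 1)
        = ((fun k : ℝ => (n - 2 * r + 1) * k + (n - 2 * r + 1)) +
            (-(fun k => (∏ j, rChoose k (a i₀ j)) - k ^ 2))) +
          (-(fun k => ∑ i ∈ Finset.univ.erase i₀, ∏ j, rChoose k (a i j))) := by
      funext k
      simp only [Pi.add_apply, Pi.neg_apply]
      rw [← Finset.add_sum_erase _ _ (Finset.mem_univ i₀)]
      ring
    rwa [heq]
  refine ⟨hcon, fun k hk => ?_⟩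
  have hseg : k ∈ segment ℝ (0 : ℝ) r := by rw [segment_eq_Icc hr]; exact hk
  exact hcon.ge_on_segment Set.self_mem_Ici hr hseg
end

section
/- Let V be a vector space over an algebraically closed field k of characteristic p > 0, let q be a power of p, and let a = ∑_{j=0}^m a_j t^j ∈ ℤ_{≥0}[t]. Suppose the multiplication map mult: ⨂_{j=0}^m Sym^{a_j}(V*)^{[j]} → Sym^{a(q)}(V*) (sending a tensor of forms f_0 ⊗ f_1 ⊗ ... ⊗ f_m to ∏_j f_j^{q^j}) fails to be injective for some finite-dimensional V. Then it already fails to be injective for some V of dimension 2. -/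
/-- The multiplication map `mult : ⨂_j Sym^{a_j}(V^*)^{[j]} → Sym^{a(q)}(V^*)` for
`V = k^n`, written in the monomial basis of the source: the source is the free
`k`-module on tuples `d = (d_0, …, d_m)` of exponent vectors with `|d_j| = a_j`
(the monomial basis of `⨂_j Sym^{a_j}(V^*)^{[j]}`), and the basis element indexed by
`d` is sent to the product `∏_j (x^{d_j})^{q^j}`, i.e. the monomial with exponent
vector `∑_j q^j · d_j`. -/
noncomputable def multMap (k : Type*) [CommSemiring k] (q n m : ℕ)
    (a : Fin (m + 1) → ℕ) :
    ({d : Fin (m + 1) → (Fin n →₀ ℕ) // ∀ j, ((d j).sum fun _ e => e) = a j} →₀ k)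
      →ₗ[k] MvPolynomial (Fin n) k :=
  Finsupp.lsum k (fun d => LinearMap.toSpanSingleton k _
    (MvPolynomial.monomial (∑ j : Fin (m + 1), q ^ (j : ℕ) • (d.1 j)) (1 : k)))


/-! `multMap` sends the monomial basis of its source to monomials, so it is injective exactly
when the exponent map `d ↦ ∑_j q^j • d_j` is. Given two distinct tuples `d ≠ d'` with the same
exponent, pick a coordinate `i` at which some `d_j` and `d'_j` differ and push everything forward
along `Fin n → Fin 2` sending `i` to `0` and every other coordinate to `1`: pushforward commutes
with the exponent map and preserves the degrees `|d_j|`, and it remembers the `i`-th coordinate,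
so the two tuples stay distinct but still collide in two variables. -/

theorem Finsupp.mapDomain_apply_of_fiber_eq {α β M : Type*} [AddCommMonoid M] {f : α → β}
    {i : α} (hf : ∀ x, f x = f i → x = i) (g : α →₀ M) : g.mapDomain f (f i) = g i := by
  classical
  rw [Finsupp.mapDomain_apply_eq_sum]
  refine Finset.sum_eq_single i (fun x hx hxi => absurd (hf x (Finset.mem_filter.1 hx).2) hxi)
    fun hi => ?_
  by_contra hgi
  exact hi (Finset.mem_filter.2 ⟨Finsupp.mem_support_iff.2 hgi, rfl⟩)

namespace MultMap

abbrev Index (n m : ℕ) (a : Fin (m + 1) → ℕ) :=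
  {d : Fin (m + 1) → (Fin n →₀ ℕ) // ∀ j, ((d j).sum fun _ e => e) = a j}

variable {n m : ℕ} {a : Fin (m + 1) → ℕ}

noncomputable def exponent (q : ℕ) (d : Index n m a) : Fin n →₀ ℕ :=
  ∑ j : Fin (m + 1), q ^ (j : ℕ) • d.1 j

theorem multMap_single (k : Type*) [CommSemiring k] (q : ℕ) (d : Index n m a) (c : k) :
    multMap k q n m a (Finsupp.single d c) = MvPolynomial.monomial (exponent q d) c := by
  simp [multMap, exponent, MvPolynomial.smul_monomial]

theorem multMap_eq_ofCoeff_mapDomain (k : Type*) [CommSemiring k] (q : ℕ)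
    (x : Index n m a →₀ k) :
    multMap k q n m a x = AddMonoidAlgebra.ofCoeff (x.mapDomain (exponent q)) := by
  induction x using Finsupp.induction_linear with
  | zero => simp
  | add f g hf hg => rw [map_add, hf, hg, Finsupp.mapDomain_add, AddMonoidAlgebra.ofCoeff_add]
  | single d c =>
    rw [multMap_single, Finsupp.mapDomain_single, AddMonoidAlgebra.ofCoeff_single,
      MvPolynomial.single_eq_monomial]

theorem injective_multMap_iff (k : Type*) [CommSemiring k] [Nontrivial k] (q : ℕ) :
    Function.Injective (multMap k q n m a) ↔
      Function.Injective (exponent (n := n) (a := a) q) := by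
  refine ⟨fun h d d' hdd' => ?_, fun h x y hxy => ?_⟩
  · have hsingle : Finsupp.single d (1 : k) = Finsupp.single d' 1 :=
      h (by rw [multMap_single, multMap_single, hdd'])
    exact (Finsupp.single_left_injective one_ne_zero) hsingle
  · rw [multMap_eq_ofCoeff_mapDomain, multMap_eq_ofCoeff_mapDomain] at hxy
    exact Finsupp.mapDomain_injective h (AddMonoidAlgebra.ofCoeff_injective hxy)

noncomputable def Index.mapDomain {n' : ℕ} (f : Fin n → Fin n') (d : Index n m a) :
    Index n' m a :=
  ⟨fun j => (d.1 j).mapDomain f, fun j => by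
    rw [Finsupp.sum_mapDomain_index (fun _ => rfl) (fun _ _ _ => rfl)]
    exact d.2 j⟩

theorem exponent_mapDomain {n' : ℕ} (q : ℕ) (f : Fin n → Fin n') (d : Index n m a) :
    exponent q (d.mapDomain f) = (exponent q d).mapDomain f := by
  simp only [exponent, Index.mapDomain, Finsupp.mapDomain_finsetSum, Finsupp.mapDomain_smul]

theorem not_injective_exponent_two (q : ℕ)
    (h : ¬ Function.Injective (exponent (n := n) (a := a) q)) :
    ¬ Function.Injective (exponent (n := 2) (a := a) q) := by
  obtain ⟨d, d', hexp, hne⟩ := Function.not_injective_iff.1 h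
  obtain ⟨j, i, hji⟩ : ∃ j i, d.1 j i ≠ d'.1 j i := by
    by_contra! hc
    exact hne (Subtype.ext (funext fun j => Finsupp.ext (hc j)))
  let f : Fin n → Fin 2 := fun x => if x = i then 0 else 1
  have hf : ∀ x, f x = f i → x = i := fun x hx => by_contra fun hxi => by simp [f, hxi] at hx
  refine Function.not_injective_iff.2 ⟨d.mapDomain f, d'.mapDomain f, ?_, fun hdd' => hji ?_⟩
  · rw [exponent_mapDomain, exponent_mapDomain, hexp]
  · have hcoord := congrArg (fun c : Index 2 m a => c.1 j (f i)) hdd'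
    simpa only [Index.mapDomain, Finsupp.mapDomain_apply_of_fiber_eq hf] using hcoord

end MultMap

theorem stmt17_general (k : Type*) [Field k] (p e : ℕ) (m : ℕ) (a : Fin (m + 1) → ℕ)
    (h : ∃ n : ℕ, ¬ Function.Injective (multMap k (p ^ e) n m a)) :
    ¬ Function.Injective (multMap k (p ^ e) 2 m a) := by
  obtain ⟨n, hn⟩ := h
  rw [MultMap.injective_multMap_iff] at hn ⊢
  exact MultMap.not_injective_exponent_two _ hn

/-- if the multiplication map fails to be injective for some
finite-dimensional `V`, then it already fails to be injective in dimension `2`. -/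
theorem stmt17 (k : Type*) [Field k] [IsAlgClosed k] (p e : ℕ) [CharP k p]
    (hp : p.Prime) (he : 1 ≤ e) (m : ℕ) (a : Fin (m + 1) → ℕ)
    (h : ∃ n : ℕ, ¬ Function.Injective (multMap k (p ^ e) n m a)) :
    ¬ Function.Injective (multMap k (p ^ e) 2 m a) :=
  stmt17_general k p e m a h
end
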